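/- With θ ∈ (0,1), C̄ ≥ 1, and ε_dec > 0 chosen as in the excess-decay iteration (namely θ so small that the one-step decay constant satisfies Cθ ≤ 1/2, C̄ = 1 + 2C_θ, and (C̄ + 1)ε_dec ≤ ε_it), the following holds: if ε ∈ (0, ε_dec) and E ⊂ ℝⁿ is a (Λ, r₀)-minimizer of P_Φ with 0 ∈ ∂E, 0 < r ≤ r₀, and Exc(E, r) + Λ + ℓ r ≤ ε, then for every integer k ≥ 0 one has Exc(E, θ^k r) ≤ C̄ ε. -/

import Mathlib

open MeasureTheory Metric Set Filter
open scoped RealInnerProductSpace ENNReal NNReal Topology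

noncomputable section

/-- `ℝⁿ` as a Euclidean space. -/
abbrev Rn (n : ℕ) : Type := EuclideanSpace ℝ (Fin n)

namespace AlmostMinPaper

variable {n : ℕ}

/-- The measure-theoretic boundary `∂E`: points where neither `E` nor its complement has
locally vanishing Lebesgue measure. -/
def mBoundary (E : Set (Rn n)) : Set (Rn n) :=
  {x | ∀ r > 0, 0 < volume (E ∩ ball x r) ∧ 0 < volume (ball x r \ E)}

/-- `ν` is the measure-theoretic outward unit normal of `E` at `x`: blow-ups of `E` at `x`
converge in measure to the half-space with outward normal `ν`. -/
def IsMTNormal (E : Set (Rn n)) (x ν : Rn n) : Prop :=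
  ‖ν‖ = 1 ∧
    Tendsto
      (fun r : ℝ =>
        volume ((symmDiff E {y : Rn n | ⟪y - x, ν⟫ ≤ 0}) ∩ ball x r) / ENNReal.ofReal (r ^ n))
      (nhdsWithin 0 (Ioi 0)) (nhds 0)

/-- The reduced boundary `∂*E` (points with a measure-theoretic outward unit normal). -/
def reducedBoundary (E : Set (Rn n)) : Set (Rn n) :=
  {x | ∃ ν, IsMTNormal E x ν}

open Classical in
/-- The measure-theoretic outward unit normal `ν_E` (defined to be `0` off `∂*E`). -/
def nuE (E : Set (Rn n)) (x : Rn n) : Rn n :=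
  if h : ∃ ν, IsMTNormal E x ν then h.choose else 0

/-- `E` is a set of finite perimeter (via Federer's criterion). -/
def FinitePerimeter (E : Set (Rn n)) : Prop :=
  MeasurableSet E ∧ μH[(n : ℝ) - 1] (mBoundary E) ≠ ⊤

/-- The Euclidean relative perimeter `P(E, U) = H^{n-1}(∂E ∩ U)`. -/
def per (E U : Set (Rn n)) : ℝ≥0∞ :=
  μH[(n : ℝ) - 1] (mBoundary E ∩ U)

/-- The anisotropic relative perimeter `P_Φ(E, U) = ∫_{∂E ∩ U} Φ(x, ν_E(x)) dH^{n-1}(x)`. -/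
def aniPer (Φ : Rn n → Rn n → ℝ) (E U : Set (Rn n)) : ℝ≥0∞ :=
  ∫⁻ y in mBoundary E ∩ U, ENNReal.ofReal (Φ y (nuE E y)) ∂(μH[(n : ℝ) - 1])

/-- A uniformly elliptic and regular anisotropy with ellipticity constant `lam ≥ 1` and
`x`-Lipschitz constant `ell ≥ 0`. -/
structure Anisotropy (n : ℕ) (lam ell : ℝ) where
  Φ : Rn n → Rn n → ℝ
  pos : ∀ x ν : Rn n, 0 < Φ x ν
  lsc : LowerSemicontinuous fun p : Rn n × Rn n => Φ p.1 p.2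
  conv : ∀ x : Rn n, ConvexOn ℝ Set.univ (Φ x)
  homog : ∀ x ν : Rn n, ∀ t : ℝ, 0 < t → Φ x (t • ν) = t * Φ x ν
  smooth : ∀ x : Rn n, ContDiffOn ℝ 2 (Φ x) {ν : Rn n | ν ≠ 0}
  lam_ge_one : 1 ≤ lam
  ell_nonneg : 0 ≤ ell
  bound_low : ∀ x ν : Rn n, ‖ν‖ = 1 → lam⁻¹ ≤ Φ x ν
  bound_up : ∀ x ν : Rn n, ‖ν‖ = 1 → Φ x ν ≤ lam
  lip_x : ∀ x y ν : Rn n, ‖ν‖ = 1 →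
    |Φ x ν - Φ y ν| + ‖fderiv ℝ (Φ x) ν - fderiv ℝ (Φ y) ν‖ ≤ ell * ‖x - y‖
  grad_bound : ∀ x ν : Rn n, ‖ν‖ = 1 →
    ‖fderiv ℝ (Φ x) ν‖ + ‖fderiv ℝ (fderiv ℝ (Φ x)) ν‖ ≤ lam
  hess_lip : ∀ x ν ν' : Rn n, ‖ν‖ = 1 → ‖ν'‖ = 1 →
    ‖fderiv ℝ (fderiv ℝ (Φ x)) ν - fderiv ℝ (fderiv ℝ (Φ x)) ν'‖ ≤ lam * ‖ν - ν'‖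
  ellipticity : ∀ x ν e : Rn n, ‖ν‖ = 1 →
    ‖e - ⟪e, ν⟫ • ν‖ ^ 2 / lam ≤ fderiv ℝ (fderiv ℝ (Φ x)) ν e e

/-- `E` is a `(Λ, r₀)`-minimizer of `P_Φ`. -/
def AlmostMin (Φ : Rn n → Rn n → ℝ) (Λ r₀ : ℝ) (E : Set (Rn n)) : Prop :=
  FinitePerimeter E ∧
    ∀ (x : Rn n) (r : ℝ), 0 < r → r ≤ r₀ →
      ∀ F : Set (Rn n), FinitePerimeter F → symmDiff E F ⊆ ball x r →
        aniPer Φ E Set.univ ≤ aniPer Φ F Set.univ + ENNReal.ofReal (Λ * r ^ (n - 1))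

/-- The spherical excess `Exc(E, x, r)`. -/
def sphExcess (E : Set (Rn n)) (x : Rn n) (r : ℝ) : ℝ :=
  ⨅ ν : Metric.sphere (0 : Rn n) 1,
    (∫⁻ y in mBoundary E ∩ ball x r,
        ENNReal.ofReal (‖(ν : Rn n) - nuE E y‖ ^ 2 / 2) ∂(μH[(n : ℝ) - 1])).toReal / r ^ (n - 1)

/-- The open cylinder `C_ν(x, r)` with axis `ν`. -/
def cylinder (x ν : Rn n) (r : ℝ) : Set (Rn n) :=
  {y : Rn n | |⟪y - x, ν⟫| < r ∧ ‖(y - x) - ⟪y - x, ν⟫ • ν‖ < r}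

/-- The cylindrical excess `Exc_ν(E, x, r)`. -/
def cylExcess (E : Set (Rn n)) (ν x : Rn n) (r : ℝ) : ℝ :=
  (∫⁻ y in mBoundary E ∩ cylinder x ν r,
      ENNReal.ofReal (‖ν - nuE E y‖ ^ 2 / 2) ∂(μH[(n : ℝ) - 1])).toReal / r ^ (n - 1)

/-- The cylindrical `L²` flatness `f_{2,ν}(E, x, r)`. -/
def flat2 (E : Set (Rn n)) (ν x : Rn n) (r : ℝ) : ℝ :=
  ⨅ h : ℝ,
    (∫⁻ y in mBoundary E ∩ cylinder x ν r,
        ENNReal.ofReal (|⟪y - x, ν⟫ - h| ^ 2 / r ^ 2) ∂(μH[(n : ℝ) - 1])).toReal / r ^ (n - 1)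

/-- `E` is `(δ, r)`-Reifenberg flat in `B_r(x)`. -/
def ReifenbergFlatIn (E : Set (Rn n)) (δ r : ℝ) (x : Rn n) : Prop :=
  ∀ (y : Rn n) (r' : ℝ), 0 < r' → ball y r' ⊆ ball x r →
    ∃ ν : Rn n, ‖ν‖ = 1 ∧
      hausdorffDist (mBoundary E ∩ ball y r')
        ({z : Rn n | ⟪z - y, ν⟫ = 0} ∩ ball y r') ≤ δ * r' ∧
      (({z ∈ ball y r' | 2 * δ * r' ≤ ⟪z - y, ν⟫} ⊆ E ∧
          {z ∈ ball y r' | ⟪z - y, ν⟫ ≤ -(2 * δ * r')} ⊆ Eᶜ) ∨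
        ({z ∈ ball y r' | 2 * δ * r' ≤ ⟪z - y, ν⟫} ⊆ Eᶜ ∧
          {z ∈ ball y r' | ⟪z - y, ν⟫ ≤ -(2 * δ * r')} ⊆ E))

/-- The last coordinate direction `e_n` (junk value `0` if `n = 0`). -/
def eN (n : ℕ) : Rn n :=
  if h : 0 < n then EuclideanSpace.single (⟨n - 1, by omega⟩ : Fin n) (1 : ℝ) else 0

/-- The hyperplane `{x_n = 0}`. -/
def hplane (n : ℕ) : Set (Rn n) := {x : Rn n | ⟪x, eN n⟫ = 0}

/-- The open disk `B'_r` of radius `r` in the hyperplane `{x_n = 0}`. -/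
def disk (n : ℕ) (r : ℝ) : Set (Rn n) := {x : Rn n | ⟪x, eN n⟫ = 0 ∧ ‖x‖ < r}


section DecayIteration

variable {θ C Cθ ε : ℝ}

/-- Since `C * θ ≤ 1/2`, one decay step halves both the excess and the `ℓ s` term, and the
`Cθ * Λ` it adds is paid for by the margin `2 * Cθ * ε` in the bound `(1 + 2 * Cθ) * ε`. -/
theorem decay_step_le_of_le {x Λ t : ℝ} (hθ0 : 0 ≤ θ) (hθ1 : θ ≤ 1) (hθC : C * θ ≤ 1 / 2)
    (hCθ : 0 ≤ Cθ) (hx0 : 0 ≤ x) (hx : x ≤ (1 + 2 * Cθ) * ε) (ht : 0 ≤ t) (hΛ : 0 ≤ Λ)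
    (hΛt : Λ + t ≤ ε) :
    C * (θ ^ 2 * x + θ * t) + Cθ * Λ ≤ (1 + 2 * Cθ) * ε := by
  have hθx : C * θ * (θ * x) ≤ 1 / 2 * x := by
    calc C * θ * (θ * x) ≤ 1 / 2 * (θ * x) := by gcongr
      _ ≤ 1 / 2 * x := by gcongr; exact mul_le_of_le_one_left hx0 hθ1
  have hθt : C * θ * t ≤ 1 / 2 * t := by gcongr
  have hCθΛ : Cθ * Λ ≤ Cθ * ε := by gcongr; linarith
  linear_combination hθx + hθt + hCθΛ + 1 / 2 * hx + 1 / 2 * hΛt + 1 / 2 * hΛ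

theorem le_of_decay_at_geometric_scales {f : ℝ → ℝ} {ℓ Λ εit r : ℝ}
    (hθ0 : 0 < θ) (hθ1 : θ < 1) (hθC : C * θ ≤ 1 / 2) (hCθ : 0 ≤ Cθ) (hℓ : 0 ≤ ℓ)
    (hΛ : 0 ≤ Λ) (hr : 0 < r) (hf : ∀ s, 0 < s → 0 ≤ f s)
    (hεit : ((1 + 2 * Cθ) + 1) * ε ≤ εit)
    (hstep : ∀ s, 0 < s → s ≤ r → f s + Λ + ℓ * s ≤ εit →
      f (θ * s) ≤ C * (θ ^ 2 * f s + ℓ * θ * s) + Cθ * Λ)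
    (hbase : f r + Λ + ℓ * r ≤ ε) (k : ℕ) :
    f (θ ^ k * r) ≤ (1 + 2 * Cθ) * ε := by
  have hℓr : 0 ≤ ℓ * r := mul_nonneg hℓ hr.le
  have hfr : 0 ≤ f r := hf r hr
  induction k with
  | zero =>
    rw [pow_zero, one_mul]
    calc f r ≤ ε := by linarith
      _ ≤ (1 + 2 * Cθ) * ε := le_mul_of_one_le_left (by linarith) (by linarith)
  | succ k ih =>
    set s := θ ^ k * r
    have hs : 0 < s := by positivity
    have hsr : s ≤ r := mul_le_of_le_one_left hr.le (pow_le_one₀ hθ0.le hθ1.le)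
    have hℓs : ℓ * s ≤ ℓ * r := mul_le_mul_of_nonneg_left hsr hℓ
    have hfs : 0 ≤ f s := hf s hs
    have hθs : θ ^ (k + 1) * r = θ * s := by ring
    calc f (θ ^ (k + 1) * r) ≤ C * (θ ^ 2 * f s + ℓ * θ * s) + Cθ * Λ :=
          hθs ▸ hstep s hs hsr (by linarith)
      _ = C * (θ ^ 2 * f s + θ * (ℓ * s)) + Cθ * Λ := by ring
      _ ≤ (1 + 2 * Cθ) * ε :=
          decay_step_le_of_le hθ0.le hθ1.le hθC hCθ hfs ih (by positivity) hΛ (by linarith)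

end DecayIteration

theorem sphExcess_nonneg (E : Set (Rn n)) (x : Rn n) {r : ℝ} (hr : 0 ≤ r) :
    0 ≤ sphExcess E x r :=
  Real.iInf_nonneg fun _ => div_nonneg ENNReal.toReal_nonneg (pow_nonneg hr _)

theorem excess_small_at_all_scales_general (n : ℕ) (lam ell : ℝ)
    (A : Anisotropy n lam ell) (r₀ : ℝ)
    (θ C Cθ εit εdec : ℝ)
    (hθ0 : 0 < θ) (hθ1 : θ < 1) (hCθ : 0 < Cθ)
    (hstep : ∀ (Λ : ℝ) (E : Set (Rn n)) (r : ℝ),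
      0 < Λ → AlmostMin A.Φ Λ r₀ E → (0 : Rn n) ∈ mBoundary E → 0 < r → r ≤ r₀ →
      sphExcess E 0 r + Λ + ell * r ≤ εit →
      sphExcess E 0 (θ * r) ≤ C * (θ ^ 2 * sphExcess E 0 r + ell * θ * r) + Cθ * Λ)
    (hθC : C * θ ≤ 1 / 2)
    (hcomp : ((1 + 2 * Cθ) + 1) * εdec ≤ εit) :
    ∀ ε : ℝ, 0 < ε → ε < εdec →
      ∀ (Λ : ℝ) (E : Set (Rn n)) (r : ℝ),
        0 < Λ → AlmostMin A.Φ Λ r₀ E → (0 : Rn n) ∈ mBoundary E → 0 < r → r ≤ r₀ →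
        sphExcess E 0 r + Λ + ell * r ≤ ε →
        ∀ k : ℕ, sphExcess E 0 (θ ^ k * r) ≤ (1 + 2 * Cθ) * ε := by
  intro ε _ hεdec Λ E r hΛ hmin h0 hr hrr₀ hbase k
  have hεit : ((1 + 2 * Cθ) + 1) * ε ≤ εit := le_trans (by gcongr) hcomp
  exact le_of_decay_at_geometric_scales hθ0 hθ1 hθC hCθ.le A.ell_nonneg hΛ.le hr
    (fun s hs => sphExcess_nonneg E 0 hs.le) hεit
    (fun s hs hsr => hstep Λ E s hΛ hmin h0 hs (hsr.trans hrr₀)) hbase k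

/-- **Excess stays small along the iteration.** Suppose the one-step decay holds with
constants `ε_it, C, C_θ` for `θ ∈ (0,1)` with `Cθ ≤ 1/2`, set `C̄ = 1 + 2C_θ`, and let
`ε_dec > 0` satisfy `(C̄ + 1) ε_dec ≤ ε_it`. If `ε ∈ (0, ε_dec)` and `E` is a
`(Λ, r₀)`-minimizer of `P_Φ` with `0 ∈ ∂E`, `0 < r ≤ r₀` and `Exc(E, r) + Λ + ℓ r ≤ ε`,
then `Exc(E, θ^k r) ≤ C̄ ε` for every `k ≥ 0`. -/
theorem excess_small_at_all_scales (n : ℕ) (hn : 2 ≤ n) (lam ell : ℝ) (hlam : 1 ≤ lam)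
    (A : Anisotropy n lam ell) (r₀ : ℝ) (hr₀ : 0 < r₀)
    (θ C Cθ εit εdec : ℝ)
    (hθ0 : 0 < θ) (hθ1 : θ < 1) (hC : 0 < C) (hCθ : 0 < Cθ) (hεit : 0 < εit)
    (hstep : ∀ (Λ : ℝ) (E : Set (Rn n)) (r : ℝ),
      0 < Λ → AlmostMin A.Φ Λ r₀ E → (0 : Rn n) ∈ mBoundary E → 0 < r → r ≤ r₀ →
      sphExcess E 0 r + Λ + ell * r ≤ εit →
      sphExcess E 0 (θ * r) ≤ C * (θ ^ 2 * sphExcess E 0 r + ell * θ * r) + Cθ * Λ)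
    (hθC : C * θ ≤ 1 / 2)
    (hεdec : 0 < εdec) (hcomp : ((1 + 2 * Cθ) + 1) * εdec ≤ εit) :
    ∀ ε : ℝ, 0 < ε → ε < εdec →
      ∀ (Λ : ℝ) (E : Set (Rn n)) (r : ℝ),
        0 < Λ → AlmostMin A.Φ Λ r₀ E → (0 : Rn n) ∈ mBoundary E → 0 < r → r ≤ r₀ →
        sphExcess E 0 r + Λ + ell * r ≤ ε →
        ∀ k : ℕ, sphExcess E 0 (θ ^ k * r) ≤ (1 + 2 * Cθ) * ε :=
  excess_small_at_all_scales_general n lam ell A r₀ θ C Cθ εit εdec hθ0 hθ1 hCθ hstep hθC hcomp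

end AlmostMinPaper
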